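/- arXiv:1909.06083 — 2 statements merged into one kernel-verified Lean document; each statement's English description precedes it below -/
import Mathlib

section
/- Let (ξ_i)_{i≥1} be independent and identically distributed real-valued random variables whose common distribution is atomless and symmetric (ξ_1 and −ξ_1 have the same distribution), and let S_0 = 0, S_j = ξ_1 + ⋯ + ξ_j. Then for every n ≥ 1, P(S_1 ≤ 0, S_2 ≤ 0, …, S_n ≤ 0) = binom(2n, n) / 4^n. -/
open MeasureTheory ProbabilityTheory

open MeasureTheory Set

noncomputable section
namespace SpAn

/-- partial sum of the first `j` coordinates -/
def psum {m : ℕ} (x : Fin m → ℝ) (j : ℕ) : ℝ :=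
  ∑ i : Fin m, if (i : ℕ) < j then x i else 0

lemma psum_zero {m : ℕ} (x : Fin m → ℝ) : psum x 0 = 0 := by simp [psum]

lemma psum_of_le {m j : ℕ} (hm : m ≤ j) (x : Fin m → ℝ) : psum x j = psum x m := by
  unfold psum
  apply Finset.sum_congr rfl
  intro i _
  have : (i : ℕ) < m := i.isLt
  simp only [if_pos (lt_of_lt_of_le this hm), if_pos this]

lemma measurable_psum (m j : ℕ) : Measurable (fun x : Fin m → ℝ => psum x j) := by
  unfold psum
  exact Finset.measurable_sum _ fun i _ => by
    split_ifs
    · exact measurable_pi_apply i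
    · exact measurable_const

lemma psum_append {k l : ℕ} (y : Fin k → ℝ) (z : Fin l → ℝ) (j : ℕ) :
    psum (Fin.append y z) j = psum y j + psum z (j - k) := by
  unfold psum
  rw [Fin.sum_univ_add]
  congr 1
  · apply Finset.sum_congr rfl
    intro i _
    rw [Fin.append_left]
    rfl
  · apply Finset.sum_congr rfl
    intro i _
    rw [Fin.append_right]
    simp only [Fin.coe_natAdd]
    have : k + (i : ℕ) < j ↔ (i : ℕ) < j - k := by omega
    simp only [this]

lemma psum_neg {m : ℕ} (x : Fin m → ℝ) (j : ℕ) : psum (-x) j = -psum x j := by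
  unfold psum
  rw [← Finset.sum_neg_distrib]
  apply Finset.sum_congr rfl
  intro i _
  split_ifs <;> simp

lemma psum_rev {m : ℕ} (x : Fin m → ℝ) (j : ℕ) (hj : j ≤ m) :
    psum (x ∘ Fin.rev) j = psum x m - psum x (m - j) := by
  unfold psum
  rw [← Finset.sum_sub_distrib]
  rw [← Fintype.sum_equiv Fin.revPerm
    (fun i => (if (i : ℕ) < m then x i else 0) - if (i : ℕ) < m - j then x i else 0)
    (fun i => if (i : ℕ) < j then (x ∘ Fin.rev) i else 0) ?_]
  intro i
  simp only [Fin.revPerm_apply, Fin.val_rev, Function.comp_apply, Fin.rev_rev]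
  have him : (i : ℕ) < m := i.isLt
  by_cases hc : (i : ℕ) < m - j
  · rw [if_pos him, if_pos hc, if_neg (by omega : ¬ m - ((i:ℕ) + 1) < j)]
    ring
  · rw [if_pos him, if_neg hc, if_pos (by omega : m - ((i:ℕ) + 1) < j)]
    ring

variable (μ : Measure ℝ) [IsProbabilityMeasure μ]

def pm (m : ℕ) : Measure (Fin m → ℝ) := Measure.pi fun _ => μ

instance (m : ℕ) : IsProbabilityMeasure (pm μ m) := by
  unfold pm; infer_instance

lemma mp_comp_equiv (m : ℕ) (e : Fin m ≃ Fin m) :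
    MeasurePreserving (fun x : Fin m → ℝ => x ∘ e) (pm μ m) (pm μ m) := by
  have hm : Measurable (fun x : Fin m → ℝ => x ∘ e) :=
    measurable_pi_iff.2 fun i => measurable_pi_apply (e i)
  refine ⟨hm, ?_⟩
  show Measure.map _ (pm μ m) = pm μ m
  unfold pm
  refine (Measure.pi_eq fun s hs => ?_).symm
  rw [Measure.map_apply hm (MeasurableSet.univ_pi hs)]
  have hpre : (fun x : Fin m → ℝ => x ∘ e) ⁻¹' (univ.pi s)
      = univ.pi (fun i => s (e.symm i)) := by
    ext x
    simp only [mem_preimage, mem_univ_pi, Function.comp_apply]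
    constructor
    · intro h i
      have := h (e.symm i)
      simpa using this
    · intro h i
      have := h (e i)
      simpa using this
  rw [hpre, Measure.pi_pi]
  exact Equiv.prod_comp e.symm (fun j => μ (s j))

lemma mp_neg (hsym : Measure.map Neg.neg μ = μ) (m : ℕ) :
    MeasurePreserving (fun x : Fin m → ℝ => -x) (pm μ m) (pm μ m) := by
  have hm : Measurable (fun x : Fin m → ℝ => -x) :=
    measurable_pi_iff.2 fun i => (measurable_pi_apply i).neg
  refine ⟨hm, ?_⟩
  show Measure.map _ (pm μ m) = pm μ m
  unfold pm
  refine (Measure.pi_eq fun s hs => ?_).symm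
  rw [Measure.map_apply hm (MeasurableSet.univ_pi hs)]
  have hpre : (fun x : Fin m → ℝ => -x) ⁻¹' (univ.pi s)
      = univ.pi (fun i => Neg.neg ⁻¹' (s i)) := by
    ext x
    simp [mem_univ_pi]
  rw [hpre, Measure.pi_pi]
  refine Finset.prod_congr rfl fun i _ => ?_
  rw [← Measure.map_apply measurable_neg (hs i), hsym]

lemma mp_append (k l : ℕ) :
    MeasurePreserving (fun p : (Fin k → ℝ) × (Fin l → ℝ) => Fin.append p.1 p.2)
      ((pm μ k).prod (pm μ l)) (pm μ (k + l)) := by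
  have hm : Measurable (fun p : (Fin k → ℝ) × (Fin l → ℝ) => Fin.append p.1 p.2) := by
    rw [measurable_pi_iff]
    intro i
    refine Fin.addCases (motive := fun i => Measurable
      fun p : (Fin k → ℝ) × (Fin l → ℝ) => Fin.append p.1 p.2 i)
      (fun i0 => ?_) (fun i0 => ?_) i
    · simp only [Fin.append_left]
      exact (measurable_pi_apply i0).comp measurable_fst
    · simp only [Fin.append_right]
      exact (measurable_pi_apply i0).comp measurable_snd
  refine ⟨hm, ?_⟩
  show Measure.map _ _ = pm μ (k + l)
  unfold pm
  refine (Measure.pi_eq fun s hs => ?_).symm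
  rw [Measure.map_apply hm (MeasurableSet.univ_pi hs)]
  have hpre : (fun p : (Fin k → ℝ) × (Fin l → ℝ) => Fin.append p.1 p.2) ⁻¹' (univ.pi s)
      = (univ.pi fun i => s (Fin.castAdd l i)) ×ˢ (univ.pi fun i => s (Fin.natAdd k i)) := by
    ext p
    simp only [mem_preimage, mem_univ_pi, mem_prod]
    constructor
    · intro h
      exact ⟨fun i => by simpa [Fin.append_left] using h (Fin.castAdd l i),
             fun i => by simpa [Fin.append_right] using h (Fin.natAdd k i)⟩
    · intro h i
      refine Fin.addCases (motive := fun i => Fin.append p.1 p.2 i ∈ s i)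
        (fun i0 => ?_) (fun i0 => ?_) i
      · simp only [Fin.append_left]; exact h.1 i0
      · simp only [Fin.append_right]; exact h.2 i0
  rw [hpre, Measure.prod_prod]
  rw [Measure.pi_pi, Measure.pi_pi]
  exact (Fin.prod_univ_add (f := fun i => μ (s i))).symm

lemma psum_succ_head {m : ℕ} (x : Fin (m+1) → ℝ) (j : ℕ) (hj : 1 ≤ j) :
    psum x j = x 0 + psum (fun i : Fin m => x i.succ) (j - 1) := by
  unfold psum
  rw [Fin.sum_univ_succ]
  congr 1
  · rw [if_pos (show ((0 : Fin (m+1)) : ℕ) < j by simp; omega)]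
  · apply Finset.sum_congr rfl
    intro i _
    have : ((i.succ : Fin (m+1)) : ℕ) < j ↔ (i : ℕ) < j - 1 := by
      simp only [Fin.val_succ]
      omega
    simp only [this]

lemma null_psum_zero (h0 : ∀ x : ℝ, μ {x} = 0) (m j : ℕ) (hj : 1 ≤ j) :
    pm μ (m + 1) {x | psum x j = 0} = 0 := by
  set e := MeasurableEquiv.piFinSuccAbove (fun _ : Fin (m+1) => ℝ) 0 with he
  have mp1 : MeasurePreserving e (pm μ (m+1)) (μ.prod (pm μ m)) := by
    unfold pm
    exact measurePreserving_piFinSuccAbove (fun _ : Fin (m+1) => μ) 0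
  have mp2 : MeasurePreserving (Prod.swap : ℝ × (Fin m → ℝ) → (Fin m → ℝ) × ℝ)
      (μ.prod (pm μ m)) ((pm μ m).prod μ) := Measure.measurePreserving_swap
  have mp := mp2.comp mp1
  set W : Set ((Fin m → ℝ) × ℝ) := {p | p.2 + psum p.1 (j-1) = 0} with hW
  have hWmeas : MeasurableSet W := by
    apply measurableSet_eq_fun
    · exact measurable_snd.add ((measurable_psum m (j-1)).comp measurable_fst)
    · exact measurable_const
  have hpre : (Prod.swap ∘ e) ⁻¹' W = {x : Fin (m+1) → ℝ | psum x j = 0} := by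
    ext x
    have hex : (Prod.swap ∘ e) x = (fun i : Fin m => x i.succ, x 0) := by
      simp [he, MeasurableEquiv.piFinSuccAbove_apply, Fin.succAbove_zero]
      rfl
    simp only [mem_preimage, hex, hW, mem_setOf_eq]
    rw [psum_succ_head x j hj]
  have key : pm μ (m+1) {x | psum x j = 0} = ((pm μ m).prod μ) W := by
    rw [← hpre]
    exact mp.measure_preimage hWmeas.nullMeasurableSet
  rw [key, Measure.prod_apply hWmeas]
  have : ∀ y : Fin m → ℝ, (Prod.mk y ⁻¹' W) = {-psum y (j-1)} := by
    intro y
    ext a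
    simp only [hW, mem_preimage, mem_setOf_eq, mem_singleton_iff]
    constructor <;> intro h <;> linarith
  simp only [this, h0]
  simp

/-- events -/
def Qset (m : ℕ) : Set (Fin m → ℝ) := {x | ∀ j, 1 ≤ j → j ≤ m → psum x j ≤ 0}
def Pset (m : ℕ) : Set (Fin m → ℝ) := {x | ∀ j, 1 ≤ j → j ≤ m → 0 < psum x j}
def Nset (m : ℕ) : Set (Fin m → ℝ) := {x | ∀ j, 1 ≤ j → j ≤ m → psum x j < 0}
def Aset (m : ℕ) : Set (Fin m → ℝ) := {x | ∀ j, j < m → psum x j < psum x m}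
def Eset (m k : ℕ) : Set (Fin m → ℝ) :=
  {x | (∀ j, j < k → psum x j < psum x k) ∧ (∀ j, k < j → j ≤ m → psum x j ≤ psum x k)}

lemma measurableSet_Qset (m : ℕ) : MeasurableSet (Qset m) := by
  have : Qset m = ⋂ (j : ℕ) (_ : 1 ≤ j) (_ : j ≤ m), {x : Fin m → ℝ | psum x j ≤ 0} := by
    ext x; simp [Qset]
  rw [this]
  exact MeasurableSet.iInter fun j => MeasurableSet.iInter fun _ => MeasurableSet.iInter fun _ =>
    measurableSet_le (measurable_psum m j) measurable_const

lemma measurableSet_Pset (m : ℕ) : MeasurableSet (Pset m) := by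
  have : Pset m = ⋂ (j : ℕ) (_ : 1 ≤ j) (_ : j ≤ m), {x : Fin m → ℝ | 0 < psum x j} := by
    ext x; simp [Pset]
  rw [this]
  exact MeasurableSet.iInter fun j => MeasurableSet.iInter fun _ => MeasurableSet.iInter fun _ =>
    measurableSet_lt measurable_const (measurable_psum m j)

lemma measurableSet_Eset (m k : ℕ) : MeasurableSet (Eset m k) := by
  have : Eset m k = (⋂ (j : ℕ) (_ : j < k), {x : Fin m → ℝ | psum x j < psum x k})
      ∩ ⋂ (j : ℕ) (_ : k < j) (_ : j ≤ m), {x : Fin m → ℝ | psum x j ≤ psum x k} := by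
    ext x; simp only [Eset, mem_setOf_eq, mem_inter_iff, mem_iInter]
  rw [this]
  exact (MeasurableSet.iInter fun j => MeasurableSet.iInter fun _ =>
      measurableSet_lt (measurable_psum m j) (measurable_psum m k)).inter
    (MeasurableSet.iInter fun j => MeasurableSet.iInter fun _ => MeasurableSet.iInter fun _ =>
      measurableSet_le (measurable_psum m j) (measurable_psum m k))

lemma Aset_eq_preimage (k : ℕ) :
    Aset k = (fun x : Fin k → ℝ => x ∘ Fin.rev) ⁻¹' Pset k := by
  ext x
  simp only [Aset, Pset, mem_preimage, mem_setOf_eq]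
  constructor
  · intro h j hj1 hjk
    rw [psum_rev x j hjk]
    have := h (k - j) (by omega)
    linarith
  · intro h j hj
    have h2 := h (k - j) (by omega) (by omega)
    rw [psum_rev x (k - j) (by omega), show k - (k - j) = j by omega] at h2
    linarith

lemma measure_Aset (k : ℕ) : pm μ k (Aset k) = pm μ k (Pset k) := by
  have h := (mp_comp_equiv μ k Fin.revPerm).measure_preimage
    (measurableSet_Pset k).nullMeasurableSet
  have hfun : (fun x : Fin k → ℝ => x ∘ ⇑(Fin.revPerm : Equiv.Perm (Fin k)))
      = fun x : Fin k → ℝ => x ∘ Fin.rev := by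
    funext x
    ext i
    simp
  rw [hfun] at h
  rw [Aset_eq_preimage, h]

lemma Nset_eq_preimage (k : ℕ) : Nset k = (fun x : Fin k → ℝ => -x) ⁻¹' Pset k := by
  ext x
  simp only [Nset, Pset, mem_preimage, mem_setOf_eq, psum_neg]
  constructor <;> intro h j h1 h2 <;> have := h j h1 h2 <;> linarith

lemma measure_Nset (hsym : Measure.map Neg.neg μ = μ) (k : ℕ) :
    pm μ k (Nset k) = pm μ k (Pset k) := by
  rw [Nset_eq_preimage]
  exact (mp_neg μ hsym k).measure_preimage (measurableSet_Pset k).nullMeasurableSet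

lemma measure_Qset_eq_Pset (h0 : ∀ x : ℝ, μ {x} = 0) (hsym : Measure.map Neg.neg μ = μ)
    (k : ℕ) : pm μ k (Qset k) = pm μ k (Pset k) := by
  rcases k with _ | m
  · have h1 : Qset 0 = univ := by
      ext x; simp only [Qset, mem_setOf_eq, mem_univ, iff_true]; intro j h1 h2; omega
    have h2 : Pset 0 = univ := by
      ext x; simp only [Pset, mem_setOf_eq, mem_univ, iff_true]; intro j h1 h2; omega
    rw [h1, h2]
  · have hsub1 : Nset (m+1) ⊆ Qset (m+1) := fun x hx j h1 h2 => (hx j h1 h2).le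
    have hsub2 : Qset (m+1) ⊆ Nset (m+1) ∪ ⋃ j ∈ Finset.Icc 1 (m+1),
        {x : Fin (m+1) → ℝ | psum x j = 0} := by
      intro x hx
      by_cases hxn : x ∈ Nset (m+1)
      · exact Or.inl hxn
      · right
        simp only [Nset, mem_setOf_eq] at hxn
        push_neg at hxn
        obtain ⟨j, h1, h2, h3⟩ := hxn
        refine mem_iUnion₂.2 ⟨j, Finset.mem_Icc.2 ⟨h1, h2⟩, ?_⟩
        exact le_antisymm (hx j h1 h2) h3
    have hnull : pm μ (m+1) (⋃ j ∈ Finset.Icc 1 (m+1),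
        {x : Fin (m+1) → ℝ | psum x j = 0}) = 0 := by
      refine (measure_biUnion_null_iff (Finset.Icc 1 (m+1)).countable_toSet).2 ?_
      intro j hj
      simp only [Finset.coe_Icc, mem_Icc] at hj
      exact null_psum_zero μ h0 m j hj.1
    have hle : pm μ (m+1) (Qset (m+1)) ≤ pm μ (m+1) (Nset (m+1)) := by
      calc pm μ (m+1) (Qset (m+1)) ≤ pm μ (m+1) (Nset (m+1) ∪ _) := measure_mono hsub2
        _ ≤ pm μ (m+1) (Nset (m+1)) + pm μ (m+1) (⋃ j ∈ Finset.Icc 1 (m+1),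
            {x : Fin (m+1) → ℝ | psum x j = 0}) := measure_union_le _ _
        _ = pm μ (m+1) (Nset (m+1)) := by rw [hnull, add_zero]
    have hge : pm μ (m+1) (Nset (m+1)) ≤ pm μ (m+1) (Qset (m+1)) := measure_mono hsub1
    rw [le_antisymm hle hge, measure_Nset μ hsym]

lemma Eset_cover (m : ℕ) (x : Fin m → ℝ) : ∃ k ≤ m, x ∈ Eset m k := by
  classical
  have hex : ∃ k, k ≤ m ∧ ∀ j' ≤ m, psum x j' ≤ psum x k := by
    obtain ⟨b, hb, hmax⟩ := Finset.exists_max_image (Finset.range (m+1))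
      (fun j => psum x j) ⟨0, by simp⟩
    have hbm : b ≤ m := by have := Finset.mem_range.1 hb; omega
    exact ⟨b, hbm, fun j' hj' => hmax j' (Finset.mem_range.2 (by omega))⟩
  have hP := Nat.find_spec hex
  refine ⟨Nat.find hex, hP.1, ?_, ?_⟩
  · intro j hj
    have hnP := Nat.find_min hex hj
    push_neg at hnP
    obtain ⟨j', hj', hgt⟩ := hnP (by omega)
    have h2 := hP.2 j' hj'
    linarith
  · intro j hkj hjm
    exact hP.2 j hjm

lemma Eset_disjoint_aux (m k k' : ℕ) (hk' : k' ≤ m) (h : k < k') :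
    Disjoint (Eset m k) (Eset m k') := by
  refine Set.disjoint_left.2 fun x hx hx' => ?_
  have h1 : psum x k' ≤ psum x k := hx.2 k' h (by omega)
  have h2 : psum x k < psum x k' := hx'.1 k h
  linarith

lemma Eset_disjoint (m : ℕ) : Set.PairwiseDisjoint (↑(Finset.range (m+1))) (Eset m) := by
  intro k hk k' hk' hne
  simp only [Finset.coe_range, mem_Iio] at hk hk'
  rcases Nat.lt_or_ge k k' with h | h
  · exact Eset_disjoint_aux m k k' (by omega) h
  · exact (Eset_disjoint_aux m k' k (by omega) (by omega)).symm

lemma sum_Eset (m : ℕ) : ∑ k ∈ Finset.range (m+1), pm μ m (Eset m k) = 1 := by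
  rw [← measure_biUnion_finset (Eset_disjoint m) (fun k _ => measurableSet_Eset m k)]
  have hcov : ⋃ k ∈ Finset.range (m+1), Eset m k = univ := by
    ext x
    simp only [mem_iUnion, mem_univ, iff_true, exists_prop, Finset.mem_range]
    obtain ⟨k, hk, hx⟩ := Eset_cover m x
    exact ⟨k, by omega, hx⟩
  rw [hcov]
  exact measure_univ

lemma Eset_pre_append (k l : ℕ) :
    (fun p : (Fin k → ℝ) × (Fin l → ℝ) => Fin.append p.1 p.2) ⁻¹' (Eset (k+l) k)
      = (Aset k) ×ˢ (Qset l) := by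
  ext ⟨y, z⟩
  simp only [mem_preimage, Eset, Aset, Qset, mem_prod, mem_setOf_eq]
  constructor
  · rintro ⟨h1, h2⟩
    constructor
    · intro j hj
      have := h1 j hj
      rw [psum_append, psum_append, Nat.sub_self, psum_zero,
        show j - k = 0 by omega, psum_zero] at this
      linarith
    · intro r h1r hrl
      have := h2 (k + r) (by omega) (by omega)
      rw [psum_append, psum_append, Nat.sub_self, psum_zero,
        show k + r - k = r by omega, psum_of_le (show k ≤ k + r by omega) y] at this
      linarith
  · rintro ⟨h1, h2⟩
    constructor
    · intro j hj
      rw [psum_append, psum_append, Nat.sub_self, psum_zero,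
        show j - k = 0 by omega, psum_zero]
      have := h1 j hj
      linarith
    · intro j hkj hjm
      rw [psum_append, psum_append, Nat.sub_self, psum_zero,
        psum_of_le (show k ≤ j by omega) y]
      have := h2 (j - k) (by omega) (by omega)
      linarith

lemma measure_Eset_split (k l : ℕ) :
    pm μ (k + l) (Eset (k+l) k) = pm μ k (Aset k) * pm μ l (Qset l) := by
  rw [← (mp_append μ k l).measure_preimage (measurableSet_Eset (k+l) k).nullMeasurableSet]
  rw [Eset_pre_append, Measure.prod_prod]

lemma conv (h0 : ∀ x : ℝ, μ {x} = 0) (hsym : Measure.map Neg.neg μ = μ) (m : ℕ) :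
    ∑ k ∈ Finset.range (m+1), pm μ k (Qset k) * pm μ (m-k) (Qset (m-k)) = 1 := by
  rw [← sum_Eset μ m]
  refine Finset.sum_congr rfl fun k hk => ?_
  have hkm : k ≤ m := by
    have := Finset.mem_range.1 hk
    omega
  obtain ⟨l, rfl⟩ := Nat.exists_eq_add_of_le hkm
  calc pm μ k (Qset k) * pm μ (k+l-k) (Qset (k+l-k))
      = pm μ k (Aset k) * pm μ l (Qset l) := by
        rw [show k+l-k = l by omega, measure_Qset_eq_Pset μ h0 hsym, measure_Aset]
    _ = pm μ (k+l) (Eset (k+l) k) := (measure_Eset_split μ k l).symm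

/-- the real-valued probability -/
def qr (m : ℕ) : ℝ := (pm μ m (Qset m)).toReal

/-- the target value -/
def cr (m : ℕ) : ℝ := (Nat.centralBinom m : ℝ) / 4 ^ m

lemma reflect_weighted (n : ℕ) :
    2 * ∑ k ∈ Finset.range (n+1), k * (Nat.centralBinom k * Nat.centralBinom (n-k))
      = n * ∑ k ∈ Finset.range (n+1), Nat.centralBinom k * Nat.centralBinom (n-k) := by
  have h := Finset.sum_range_reflect
    (fun k => k * (Nat.centralBinom k * Nat.centralBinom (n-k))) (n+1)
  have h2 : ∀ k ∈ Finset.range (n+1),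
      (n + 1 - 1 - k) * (Nat.centralBinom (n+1-1-k) * Nat.centralBinom (n-(n+1-1-k)))
        = (n - k) * (Nat.centralBinom (n-k) * Nat.centralBinom k) := by
    intro k hk
    simp only [Finset.mem_range] at hk
    have hkn : k ≤ n := by omega
    rw [show n+1-1-k = n-k by omega, Nat.sub_sub_self hkn]
  rw [Finset.sum_congr rfl h2] at h
  rw [two_mul, Finset.mul_sum]
  nth_rewrite 1 [← h]
  rw [← Finset.sum_add_distrib]
  apply Finset.sum_congr rfl
  intro k hk
  simp only [Finset.mem_range] at hk
  rw [mul_comm (Nat.centralBinom (n-k)) (Nat.centralBinom k), ← add_mul]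
  congr 1
  omega

lemma centralBinom_conv (n : ℕ) :
    ∑ k ∈ Finset.range (n+1), Nat.centralBinom k * Nat.centralBinom (n-k) = 4 ^ n := by
  induction n with
  | zero => simp [Nat.centralBinom]
  | succ n ih =>
    have key : (n+1) * ∑ k ∈ Finset.range (n+1+1), Nat.centralBinom k * Nat.centralBinom (n+1-k)
        = (n+1) * 4 ^ (n+1) := by
      have hA := reflect_weighted (n+1)
      have shift : ∑ k ∈ Finset.range (n+1+1), k * (Nat.centralBinom k * Nat.centralBinom (n+1-k))
          = ∑ j ∈ Finset.range (n+1), (j+1) * (Nat.centralBinom (j+1) * Nat.centralBinom (n-j)) := by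
        rw [Finset.sum_range_succ']
        simp [Nat.add_sub_cancel]
      have rec' : ∀ j, (j+1) * (Nat.centralBinom (j+1) * Nat.centralBinom (n-j))
          = 2 * (2*j+1) * (Nat.centralBinom j * Nat.centralBinom (n-j)) := by
        intro j
        rw [← mul_assoc, Nat.succ_mul_centralBinom_succ, mul_assoc]
      have expand : ∑ j ∈ Finset.range (n+1), (j+1) * (Nat.centralBinom (j+1) * Nat.centralBinom (n-j))
          = 4 * (∑ j ∈ Finset.range (n+1), j * (Nat.centralBinom j * Nat.centralBinom (n-j)))
            + 2 * ∑ j ∈ Finset.range (n+1), Nat.centralBinom j * Nat.centralBinom (n-j) := by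
        rw [Finset.sum_congr rfl (fun j _ => rec' j), Finset.mul_sum, Finset.mul_sum,
          ← Finset.sum_add_distrib]
        apply Finset.sum_congr rfl
        intro j _
        ring
      have hA' := reflect_weighted n
      have e4 : 4 * (∑ j ∈ Finset.range (n+1), j * (Nat.centralBinom j * Nat.centralBinom (n-j)))
          = 2 * (n * ∑ j ∈ Finset.range (n+1), Nat.centralBinom j * Nat.centralBinom (n-j)) := by
        calc 4 * (∑ j ∈ Finset.range (n+1), j * (Nat.centralBinom j * Nat.centralBinom (n-j)))
            = 2 * (2 * ∑ j ∈ Finset.range (n+1), j * (Nat.centralBinom j * Nat.centralBinom (n-j))) := by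
              ring
          _ = 2 * (n * ∑ j ∈ Finset.range (n+1), Nat.centralBinom j * Nat.centralBinom (n-j)) := by
              rw [hA']
      rw [← hA, shift, expand, e4, ih]
      ring
    exact Nat.eq_of_mul_eq_mul_left (by omega) key

lemma cr_conv (m : ℕ) : ∑ k ∈ Finset.range (m+1), cr k * cr (m-k) = 1 := by
  have hterm : ∀ k ∈ Finset.range (m+1), cr k * cr (m-k)
      = ((Nat.centralBinom k * Nat.centralBinom (m-k) : ℕ) : ℝ) / 4 ^ m := by
    intro k hk
    have hkm : k ≤ m := by have := Finset.mem_range.1 hk; omega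
    unfold cr
    rw [div_mul_div_comm]
    push_cast
    rw [← pow_add, show k + (m - k) = m by omega]
  rw [Finset.sum_congr rfl hterm, ← Finset.sum_div, ← Nat.cast_sum, centralBinom_conv]
  rw [div_eq_one_iff_eq (by positivity)]
  push_cast
  ring

lemma qr_zero : qr μ 0 = 1 := by
  unfold qr
  have h1 : Qset 0 = univ := by
    ext x; simp only [Qset, mem_setOf_eq, mem_univ, iff_true]; intro j h1 h2; omega
  rw [h1, measure_univ, ENNReal.toReal_one]

lemma conv_real (h0 : ∀ x : ℝ, μ {x} = 0) (hsym : Measure.map Neg.neg μ = μ) (m : ℕ) :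
    ∑ k ∈ Finset.range (m+1), qr μ k * qr μ (m-k) = 1 := by
  have h := conv μ h0 hsym m
  have := congrArg ENNReal.toReal h
  rw [ENNReal.toReal_sum (fun k _ => ENNReal.mul_ne_top (measure_ne_top _ _)
    (measure_ne_top _ _))] at this
  simp only [ENNReal.toReal_mul, ENNReal.toReal_one] at this
  exact this

lemma qr_eq_cr (h0 : ∀ x : ℝ, μ {x} = 0) (hsym : Measure.map Neg.neg μ = μ) (n : ℕ) :
    qr μ n = cr n := by
  induction n using Nat.strong_induction_on with
  | _ n ih =>
    rcases n with _ | n'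
    · rw [qr_zero]
      unfold cr
      rw [Nat.centralBinom_zero]
      norm_num
    · have hq := conv_real μ h0 hsym (n'+1)
      have hc := cr_conv (n'+1)
      rw [Finset.sum_range_succ, Finset.sum_range_succ'] at hq hc
      have hmid : ∑ i ∈ Finset.range n', qr μ (i+1) * qr μ (n'+1-(i+1))
          = ∑ i ∈ Finset.range n', cr (i+1) * cr (n'+1-(i+1)) := by
        apply Finset.sum_congr rfl
        intro i hi
        have hi' := Finset.mem_range.1 hi
        rw [ih (i+1) (by omega), ih (n'+1-(i+1)) (by omega)]
      rw [hmid] at hq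
      rw [show n'+1-(n'+1) = 0 by omega] at hq hc
      rw [show (n'+1-0) = n'+1 by omega] at hq hc
      rw [qr_zero] at hq
      have hcr0 : cr 0 = 1 := by unfold cr; rw [Nat.centralBinom_zero]; norm_num
      rw [hcr0] at hc
      linarith

lemma Q_eq (h0 : ∀ x : ℝ, μ {x} = 0) (hsym : Measure.map Neg.neg μ = μ) (n : ℕ) :
    pm μ n (Qset n) = (Nat.centralBinom n : ENNReal) / 4 ^ n := by
  have h1 : pm μ n (Qset n) ≠ ⊤ := measure_ne_top _ _
  have h4 : ((4 : ENNReal) ^ n) ≠ 0 := by positivity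
  have h2 : ((Nat.centralBinom n : ENNReal) / 4 ^ n) ≠ ⊤ := by
    exact (ENNReal.div_lt_top (by simp) h4).ne
  refine (ENNReal.toReal_eq_toReal_iff' h1 h2).1 ?_
  have := qr_eq_cr μ h0 hsym n
  unfold qr cr at this
  rw [this, ENNReal.toReal_div, ENNReal.toReal_pow]
  norm_num
end SpAn

open MeasureTheory ProbabilityTheory SpAn in
/-- Sparre Andersen formula: for a random walk with i.i.d. increments whose common
distribution is atomless and symmetric, the probability that the walk stays nonpositive
for the first `n` steps equals `binom(2n, n) / 4^n`. -/
theorem sparre_andersen_nonpositive_prob {Ω : Type*} [MeasureSpace Ω]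
    [IsProbabilityMeasure (ℙ : Measure Ω)]
    (ξ : ℕ → Ω → ℝ) (hmeas : ∀ i, Measurable (ξ i))
    (hindep : iIndepFun ξ ℙ)
    (hident : ∀ i, Measure.map (ξ i) ℙ = Measure.map (ξ 1) ℙ)
    (hatomless : ∀ x : ℝ, Measure.map (ξ 1) ℙ {x} = 0)
    (hsymm : Measure.map (ξ 1) ℙ = Measure.map (fun ω => -(ξ 1 ω)) ℙ)
    (n : ℕ) (hn : 1 ≤ n) :
    ℙ {ω | ∀ j ∈ Finset.Icc 1 n, (∑ i ∈ Finset.Icc 1 j, ξ i ω) ≤ 0}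
      = (Nat.choose (2 * n) n : ENNReal) / 4 ^ n := by
  classical
  set μ : Measure ℝ := Measure.map (ξ 1) ℙ with hμ
  haveI : IsProbabilityMeasure μ := Measure.isProbabilityMeasure_map (hmeas 1).aemeasurable
  have hsym' : Measure.map Neg.neg μ = μ := by
    rw [hμ, Measure.map_map measurable_neg (hmeas 1)]
    exact hsymm.symm
  set V : Ω → (Fin n → ℝ) := fun ω => fun i : Fin n => ξ ((i : ℕ) + 1) ω with hV
  have hVmeas : Measurable V := measurable_pi_iff.2 fun i => hmeas _
  -- the auxiliary family of sets
  have hmap : Measure.map V ℙ = SpAn.pm μ n := by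
    unfold SpAn.pm
    refine (Measure.pi_eq fun s hs => ?_).symm
    rw [Measure.map_apply hVmeas (MeasurableSet.univ_pi hs)]
    set t : ℕ → Set ℝ := fun i => if h : i < n then s ⟨i, h⟩ else Set.univ with ht
    have htmeas : ∀ i, MeasurableSet (t i) := by
      intro i
      rw [ht]
      dsimp only
      split_ifs with h
      · exact hs _
      · exact MeasurableSet.univ
    have hpre : V ⁻¹' (Set.univ.pi s) = ⋂ m ∈ Finset.Icc 1 n, ξ m ⁻¹' (t (m-1)) := by
      ext ω
      simp only [Set.mem_preimage, Set.mem_univ_pi, Set.mem_iInter, Finset.mem_Icc]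
      constructor
      · rintro h m ⟨h1, h2⟩
        have hlt : m - 1 < n := by omega
        rw [ht]
        dsimp only
        rw [dif_pos hlt]
        have := h ⟨m-1, hlt⟩
        simpa [hV, show m-1+1 = m by omega] using this
      · intro h i
        have hi := i.isLt
        have := h ((i : ℕ) + 1) ⟨by omega, by omega⟩
        rw [ht] at this
        dsimp only at this
        rw [dif_pos (show (i:ℕ)+1-1 < n by omega)] at this
        simpa [hV, Nat.add_sub_cancel] using this
    rw [hpre, hindep.measure_inter_preimage_eq_mul (Finset.Icc 1 n)
      (fun m _ => htmeas (m-1))]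
    have hterm : ∀ m ∈ Finset.Icc 1 n, ℙ (ξ m ⁻¹' t (m-1)) = μ (t (m-1)) := by
      intro m _
      rw [← hident m, Measure.map_apply (hmeas m) (htmeas (m-1))]
    rw [Finset.prod_congr rfl hterm]
    have hIcc : Finset.Icc 1 n = Finset.image Nat.succ (Finset.range n) := by
      ext a
      simp only [Finset.mem_Icc, Finset.mem_image, Finset.mem_range]
      constructor
      · rintro ⟨h1, h2⟩; exact ⟨a - 1, by omega, by omega⟩
      · rintro ⟨b, hb, rfl⟩; omega
    rw [hIcc, Finset.prod_image (fun a _ b _ h => Nat.succ_injective h)]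
    have hfin : ∀ i : Fin n, μ (s i) = μ (t i) := by
      intro i
      rw [ht]
      dsimp only
      rw [dif_pos i.isLt]
    rw [Finset.prod_congr rfl (fun i (_ : i ∈ Finset.univ) => hfin i)]
    rw [Fin.prod_univ_eq_prod_range (fun i => μ (t i)) n]
    apply Finset.prod_congr rfl
    intro b _
    simp [Nat.succ_sub_one]
  -- identify the event
  have hev : {ω | ∀ j ∈ Finset.Icc 1 n, (∑ i ∈ Finset.Icc 1 j, ξ i ω) ≤ 0}
      = V ⁻¹' SpAn.Qset n := by
    ext ω
    simp only [Set.mem_setOf_eq, Set.mem_preimage, SpAn.Qset, Finset.mem_Icc]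
    have hkey : ∀ j, 1 ≤ j → j ≤ n → psum (V ω) j = ∑ i ∈ Finset.Icc 1 j, ξ i ω := by
      intro j h1 h2
      unfold psum
      rw [Fin.sum_univ_eq_sum_range (fun i => if i < j then ξ (i + 1) ω else 0) n]
      rw [← Finset.sum_filter, show (Finset.range n).filter (· < j) = Finset.range j from by
        ext a; simp only [Finset.mem_filter, Finset.mem_range]; omega]
      have hIcc : Finset.Icc 1 j = Finset.image Nat.succ (Finset.range j) := by
        ext a
        simp only [Finset.mem_Icc, Finset.mem_image, Finset.mem_range]
        constructor
        · rintro ⟨ha1, ha2⟩; exact ⟨a - 1, by omega, by omega⟩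
        · rintro ⟨b, hb, rfl⟩; omega
      rw [hIcc, Finset.sum_image (fun a _ b _ h => Nat.succ_injective h)]
    constructor
    · intro h j h1 h2
      rw [hkey j h1 h2]
      exact h j ⟨h1, h2⟩
    · rintro h j ⟨h1, h2⟩
      rw [← hkey j h1 h2]
      exact h j h1 h2
  rw [hev, ← Measure.map_apply hVmeas (SpAn.measurableSet_Qset n), hmap,
    SpAn.Q_eq μ hatomless hsym' n]
  rfl
end
end

section
/- Let (ξ_i)_{i≥1} be independent and identically distributed real-valued random variables, let S_0 = 0, S_j = ξ_1 + ⋯ + ξ_j, and say the walk has an upper record at time j ≥ 1 if S_j > S_i for all 0 ≤ i < j; let N_n denote the number of upper records among times 1, …, n. Define Q(z) = ∑_{t=0}^∞ q(t) z^t where q(t) = P(S_1 ≤ 0, …, S_t ≤ 0) and q(0) = 1. Then for every integer k ≥ 0 and every real z with 0 ≤ z < 1, ∑_{n=0}^∞ P(N_n = k) z^n = {1 − (1 − z) Q(z)}^k · Q(z). -/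
open MeasureTheory ProbabilityTheory

set_option linter.unusedSectionVars false

namespace RecordAux

variable {Ω : Type*} [MeasureSpace Ω] [IsProbabilityMeasure (ℙ : Measure Ω)]

/-- partial sums of the walk with increments shifted by `c`. -/
def S (ξ : ℕ → Ω → ℝ) (c j : ℕ) (ω : Ω) : ℝ := ∑ l ∈ Finset.Icc 1 j, ξ (c + l) ω

def recP (ξ : ℕ → Ω → ℝ) (c j : ℕ) (ω : Ω) : Prop :=
  ∀ i ∈ Finset.range j, S ξ c i ω < S ξ c j ω

open Classical in
noncomputable def cnt (ξ : ℕ → Ω → ℝ) (c n : ℕ) (ω : Ω) : ℕ :=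
  ∑ j ∈ Finset.Icc 1 n, if recP ξ c j ω then 1 else 0

/-- the vector of increments `ξ a, ξ (a+1), …, ξ (a+l-1)`. -/
def Vec (ξ : ℕ → Ω → ℝ) (a l : ℕ) : Ω → (Fin l → ℝ) := fun ω i => ξ (a + (i : ℕ)) ω

lemma S_zero (ξ : ℕ → Ω → ℝ) (c : ℕ) (ω : Ω) : S ξ c 0 ω = 0 := by simp [S]

lemma Icc_one_eq_Ioc (n : ℕ) : Finset.Icc 1 n = Finset.Ioc 0 n := by
  ext x; simp [Finset.mem_Icc, Finset.mem_Ioc, Nat.lt_iff_add_one_le]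

lemma sum_Icc_one {M : Type*} [AddCommMonoid M] (f : ℕ → M) (n : ℕ) :
    ∑ l ∈ Finset.Icc 1 n, f l = ∑ i ∈ Finset.range n, f (i + 1) := by
  refine Finset.sum_bij' (fun a _ => a - 1) (fun a _ => a + 1) ?_ ?_ ?_ ?_ ?_ <;>
      intro a ha <;> simp only [Finset.mem_Icc, Finset.mem_range] at ha ⊢
  · omega
  · omega
  · omega
  · omega
  · congr 1; omega

lemma S_add (ξ : ℕ → Ω → ℝ) (c m i : ℕ) (ω : Ω) :
    S ξ c (m + i) ω = S ξ c m ω + S ξ (c + m) i ω := by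
  simp only [S, Icc_one_eq_Ioc]
  rw [← Finset.sum_Ioc_consecutive _ (Nat.zero_le m) (Nat.le_add_right m i)]
  congr 1
  rw [show Finset.Ioc m (m + i) = (Finset.Ioc 0 i).map (addLeftEmbedding m) by
        rw [Finset.map_add_left_Ioc]; simp, Finset.sum_map]
  refine Finset.sum_congr rfl fun x _ => ?_
  simp [addLeftEmbedding]
  ring_nf


/-! ### Borel description of the events -/

def psum {n : ℕ} (x : Fin n → ℝ) (j : ℕ) : ℝ :=
  ∑ i ∈ Finset.univ.filter (fun i : Fin n => (i : ℕ) < j), x i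

open Classical in
def Cset (n k : ℕ) : Set (Fin n → ℝ) :=
  {x | (∑ j ∈ Finset.Icc 1 n,
      if ∀ i ∈ Finset.range j, psum x i < psum x j then 1 else 0) = k}

def Bset (m : ℕ) : Set (Fin m → ℝ) :=
  {x | (∀ j ∈ Finset.Icc 1 (m - 1), psum x j ≤ 0) ∧ 0 < psum x m}

lemma measurable_psum (n j : ℕ) : Measurable (fun x : Fin n → ℝ => psum x j) :=
  Finset.measurable_sum _ fun i _ => measurable_pi_apply i

lemma measurableSet_rec (n : ℕ) (j : ℕ) :
    MeasurableSet {x : Fin n → ℝ | ∀ i ∈ Finset.range j, psum x i < psum x j} := by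
  have : {x : Fin n → ℝ | ∀ i ∈ Finset.range j, psum x i < psum x j}
      = ⋂ i ∈ Finset.range j, {x | psum x i < psum x j} := by
    ext x; simp
  rw [this]
  exact MeasurableSet.biInter (Finset.range j).countable_toSet fun i _ =>
    measurableSet_lt (measurable_psum n i) (measurable_psum n j)

open Classical in
lemma measurableSet_Cset (n k : ℕ) : MeasurableSet (Cset n k) := by
  have h : Measurable (fun x : Fin n → ℝ => ∑ j ∈ Finset.Icc 1 n,
      if ∀ i ∈ Finset.range j, psum x i < psum x j then (1 : ℕ) else 0) := by
    refine Finset.measurable_sum _ fun j _ => Measurable.ite ?_ measurable_const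
      measurable_const
    exact measurableSet_rec n j
  exact h (measurableSet_singleton k)

lemma measurableSet_Bset (m : ℕ) : MeasurableSet (Bset m) := by
  have h1 : MeasurableSet {x : Fin m → ℝ | ∀ j ∈ Finset.Icc 1 (m - 1), psum x j ≤ 0} := by
    have : {x : Fin m → ℝ | ∀ j ∈ Finset.Icc 1 (m - 1), psum x j ≤ 0}
        = ⋂ j ∈ Finset.Icc 1 (m - 1), {x | psum x j ≤ 0} := by ext x; simp
    rw [this]
    exact MeasurableSet.biInter (Finset.Icc 1 (m - 1)).countable_toSet fun j _ =>
      measurableSet_le (measurable_psum m j) measurable_const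
  exact h1.inter (measurableSet_lt measurable_const (measurable_psum m m))

lemma measurable_Vec (ξ : ℕ → Ω → ℝ) (hmeas : ∀ i, Measurable (ξ i)) (a l : ℕ) :
    Measurable (Vec ξ a l) :=
  measurable_pi_lambda _ fun i => hmeas _

/-- the partial sums of the vector of shifted increments are the shifted partial sums. -/
lemma psum_vec (ξ : ℕ → Ω → ℝ) (c : ℕ) {n : ℕ} {j : ℕ} (hj : j ≤ n) (ω : Ω) :
    psum (Vec ξ (c + 1) n ω) j = S ξ c j ω := by
  unfold psum S Vec
  refine Finset.sum_bij' (fun (a : Fin n) _ => (a : ℕ) + 1)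
    (fun l hl => (⟨l - 1, by simp only [Finset.mem_Icc] at hl; omega⟩ : Fin n)) ?_ ?_ ?_ ?_ ?_
  · intro a ha
    simp only [Finset.mem_filter, Finset.mem_univ, true_and] at ha
    simp only [Finset.mem_Icc]; omega
  · intro a ha
    simp only [Finset.mem_Icc] at ha
    simp only [Finset.mem_filter, Finset.mem_univ, true_and]; omega
  · intro a ha
    apply Fin.ext; simp
  · intro a ha
    simp only [Finset.mem_Icc] at ha
    show a - 1 + 1 = a
    omega
  · intro a ha
    show ξ (c + 1 + (a : ℕ)) ω = ξ (c + ((a : ℕ) + 1)) ω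
    congr 1
    omega

open Classical in
/-- the record-count event is a Borel set of the increment vector. -/
lemma cnt_event_eq (ξ : ℕ → Ω → ℝ) (c n k : ℕ) :
    {ω : Ω | cnt ξ c n ω = k} = Vec ξ (c + 1) n ⁻¹' Cset n k := by
  ext ω
  simp only [Set.mem_setOf_eq, Set.mem_preimage, Cset, cnt]
  constructor <;> intro h <;> rw [← h] <;>
    refine Finset.sum_congr rfl fun j hj => ?_ <;>
    simp only [Finset.mem_Icc] at hj <;>
    refine if_congr ?_ rfl rfl <;>
    refine forall₂_congr fun i hi => ?_ <;>
    simp only [Finset.mem_range] at hi <;>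
    rw [psum_vec ξ c (by omega) ω, psum_vec ξ c (by omega) ω]

def Tev (ξ : ℕ → Ω → ℝ) (m : ℕ) : Set Ω :=
  {ω | (∀ j ∈ Finset.Icc 1 (m - 1), S ξ 0 j ω ≤ 0) ∧ 0 < S ξ 0 m ω}

def Qev (ξ : ℕ → Ω → ℝ) (t : ℕ) : Set Ω :=
  {ω | ∀ j ∈ Finset.Icc 1 t, S ξ 0 j ω ≤ 0}

lemma Tev_event_eq (ξ : ℕ → Ω → ℝ) (m : ℕ) :
    Tev ξ m = Vec ξ (0 + 1) m ⁻¹' Bset m := by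
  ext ω
  simp only [Tev, Bset, Set.mem_setOf_eq, Set.mem_preimage]
  constructor <;> intro h <;> refine ⟨fun j hj => ?_, ?_⟩
  · rw [psum_vec ξ 0 (by simp only [Finset.mem_Icc] at hj; omega) ω]; exact h.1 j hj
  · rw [psum_vec ξ 0 le_rfl ω]; exact h.2
  · have := h.1 j hj
    rwa [psum_vec ξ 0 (by simp only [Finset.mem_Icc] at hj; omega) ω] at this
  · have := h.2
    rwa [psum_vec ξ 0 le_rfl ω] at this


/-! ### Independence and stationarity of increment blocks -/

def proj (a l : ℕ) (x : (Finset.Ico a (a + l) : Finset ℕ) → ℝ) : Fin l → ℝ :=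
  fun i => x ⟨a + (i : ℕ),
    Finset.mem_Ico.mpr ⟨Nat.le_add_right a i, Nat.add_lt_add_left i.isLt a⟩⟩

lemma measurable_proj (a l : ℕ) : Measurable (proj a l) :=
  measurable_pi_lambda _ fun i => measurable_pi_apply _

lemma Vec_eq_comp (ξ : ℕ → Ω → ℝ) (a l : ℕ) :
    Vec ξ a l = proj a l ∘ (fun ω (i : (Finset.Ico a (a + l) : Finset ℕ)) => ξ i ω) := rfl

variable {ξ : ℕ → Ω → ℝ} (hmeas : ∀ i, Measurable (ξ i))
  (hindep : iIndepFun ξ ℙ)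
  (hident : ∀ i, Measure.map (ξ i) ℙ = Measure.map (ξ 1) ℙ)

include hmeas hindep in
lemma indepFun_vec {a b : ℕ} (l₁ l₂ : ℕ) (h : a + l₁ ≤ b) :
    IndepFun (Vec ξ a l₁) (Vec ξ b l₂) ℙ := by
  have hd : Disjoint (Finset.Ico a (a + l₁)) (Finset.Ico b (b + l₂)) := by
    simp only [Finset.disjoint_left, Finset.mem_Ico]
    omega
  have h0 := hindep.indepFun_finset (Finset.Ico a (a + l₁)) (Finset.Ico b (b + l₂)) hd hmeas
  rw [Vec_eq_comp ξ a l₁, Vec_eq_comp ξ b l₂]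
  exact h0.comp (measurable_proj a l₁) (measurable_proj b l₂)

include hmeas hindep in
lemma indepFun_vec_single (a l : ℕ) : IndepFun (Vec ξ a l) (ξ (a + l)) ℙ := by
  have h0 : IndepFun (Vec ξ a l) (Vec ξ (a + l) 1) ℙ := indepFun_vec hmeas hindep l 1 le_rfl
  have : ξ (a + l) = (fun x : Fin 1 → ℝ => x 0) ∘ Vec ξ (a + l) 1 := rfl
  rw [this, show Vec ξ a l = id ∘ Vec ξ a l from rfl]
  exact h0.comp measurable_id (measurable_pi_apply 0)

include hmeas hindep hident in
lemma map_vec (a b l : ℕ) : Measure.map (Vec ξ a l) ℙ = Measure.map (Vec ξ b l) ℙ := by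
  induction l with
  | zero =>
      have : Vec ξ a 0 = Vec ξ b 0 := by
        funext ω i; exact i.elim0
      rw [this]
  | succ l ih =>
      have hsnoc : ∀ c : ℕ, Vec ξ c (l + 1)
          = (fun p : (Fin l → ℝ) × ℝ => Fin.snoc p.1 p.2)
            ∘ (fun ω => (Vec ξ c l ω, ξ (c + l) ω)) := by
        intro c
        funext ω
        refine funext fun i => ?_
        refine Fin.lastCases ?_ (fun j => ?_) i
        · simp [Vec, Fin.snoc_last]
        · simp [Vec, Fin.snoc_castSucc]
      have hm : Measurable (fun p : (Fin l → ℝ) × ℝ => (Fin.snoc p.1 p.2 : Fin (l + 1) → ℝ)) := by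
        refine measurable_pi_lambda _ fun i => ?_
        refine Fin.lastCases ?_ (fun j => ?_) i
        · simpa [Fin.snoc_last] using measurable_snd
        · simp only [Fin.snoc_castSucc]; fun_prop
      have key : ∀ c : ℕ, Measure.map (fun ω => (Vec ξ c l ω, ξ (c + l) ω)) ℙ
          = (Measure.map (Vec ξ c l) ℙ).prod (Measure.map (ξ (c + l)) ℙ) := fun c =>
        (indepFun_iff_map_prod_eq_prod_map_map (measurable_Vec ξ hmeas c l).aemeasurable
          (hmeas (c + l)).aemeasurable).mp (indepFun_vec_single hmeas hindep c l)
      rw [hsnoc a, hsnoc b,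
        ← Measure.map_map hm ((measurable_Vec ξ hmeas a l).prodMk (hmeas (a + l))),
        ← Measure.map_map hm ((measurable_Vec ξ hmeas b l).prodMk (hmeas (b + l))),
        key a, key b, ih, hident (a + l), hident (b + l)]

include hmeas hindep hident in
lemma prob_vec_shift (a b l : ℕ) {C : Set (Fin l → ℝ)} (hC : MeasurableSet C) :
    ℙ (Vec ξ a l ⁻¹' C) = ℙ (Vec ξ b l ⁻¹' C) := by
  rw [← Measure.map_apply (measurable_Vec ξ hmeas a l) hC,
    ← Measure.map_apply (measurable_Vec ξ hmeas b l) hC,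
    map_vec hmeas hindep hident a b l]

include hmeas hindep in
lemma prob_inter_vec (m l : ℕ) {B : Set (Fin m → ℝ)} {C : Set (Fin l → ℝ)}
    (hB : MeasurableSet B) (hC : MeasurableSet C) :
    ℙ (Vec ξ (0 + 1) m ⁻¹' B ∩ Vec ξ (m + 1) l ⁻¹' C)
      = ℙ (Vec ξ (0 + 1) m ⁻¹' B) * ℙ (Vec ξ (m + 1) l ⁻¹' C) :=
  (indepFun_vec hmeas hindep m l (by omega)).measure_inter_preimage_eq_mul B C hB hC


/-! ### Pointwise structure of records -/

/-- no record up to time `n` iff all partial sums are `≤ 0`. -/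
lemma norec_iff (c n : ℕ) (ω : Ω) :
    (∀ j ∈ Finset.Icc 1 n, ¬ recP ξ c j ω) ↔ (∀ j ∈ Finset.Icc 1 n, S ξ c j ω ≤ 0) := by
  constructor
  · intro h j hj
    simp only [Finset.mem_Icc] at hj
    induction j using Nat.strong_induction_on with
    | _ j ih =>
      have hrec := h j (Finset.mem_Icc.mpr hj)
      simp only [recP, not_forall] at hrec
      obtain ⟨i, hi, hle⟩ := hrec
      simp only [Finset.mem_range] at hi
      push_neg at hle
      rcases Nat.eq_zero_or_pos i with h0 | h0
      · rw [h0, S_zero] at hle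
        exact hle
      · exact le_trans hle (ih i hi ⟨h0, le_trans (le_of_lt hi) hj.2⟩)
  · intro h j hj hrec
    simp only [Finset.mem_Icc] at hj
    have h0 : S ξ c 0 ω < S ξ c j ω := hrec 0 (Finset.mem_range.mpr hj.1)
    rw [S_zero] at h0
    exact absurd (h j (Finset.mem_Icc.mpr hj)) (not_le.mpr h0)

/-- membership in `Tev m`: the first record happens at time `m`. -/
lemma Tev_iff {m : ℕ} (hm : 1 ≤ m) (ω : Ω) :
    ω ∈ Tev ξ m ↔ (recP ξ 0 m ω ∧ ∀ j ∈ Finset.Icc 1 (m - 1), ¬ recP ξ 0 j ω) := by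
  constructor
  · rintro ⟨h1, h2⟩
    refine ⟨fun i hi => ?_, (norec_iff 0 (m - 1) ω).mpr h1⟩
    simp only [Finset.mem_range] at hi
    rcases Nat.eq_zero_or_pos i with h0 | h0
    · rw [h0, S_zero]; exact h2
    · exact lt_of_le_of_lt (h1 i (Finset.mem_Icc.mpr ⟨h0, by omega⟩)) h2
  · rintro ⟨h1, h2⟩
    have h3 := (norec_iff 0 (m - 1) ω).mp h2
    refine ⟨h3, ?_⟩
    have := h1 0 (Finset.mem_range.mpr hm)
    rwa [S_zero] at this

/-- records after the first record are records of the shifted walk. -/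
lemma rec_shift {m : ℕ} (hrec : recP ξ 0 m ω) {j : ℕ} (hj : 1 ≤ j) :
    recP ξ 0 (m + j) ω ↔ recP ξ m j ω := by
  have hS : ∀ i : ℕ, S ξ 0 (m + i) ω = S ξ 0 m ω + S ξ m i ω := by
    intro i
    have := S_add ξ 0 m i ω
    rwa [Nat.zero_add] at this
  constructor
  · intro h i hi
    simp only [Finset.mem_range] at hi
    have := h (m + i) (Finset.mem_range.mpr (by omega))
    rw [hS i, hS j] at this
    linarith
  · intro h i hi
    simp only [Finset.mem_range] at hi
    have hpos : 0 < S ξ m j ω := by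
      have := h 0 (Finset.mem_range.mpr hj)
      rwa [S_zero] at this
    rcases lt_or_ge i m with him | him
    · calc S ξ 0 i ω < S ξ 0 m ω := hrec i (Finset.mem_range.mpr him)
        _ < S ξ 0 m ω + S ξ m j ω := by linarith
        _ = S ξ 0 (m + j) ω := (hS j).symm
    · obtain ⟨i', rfl⟩ := Nat.exists_eq_add_of_le him
      rcases Nat.eq_zero_or_pos i' with h0 | h0
      · rw [h0, hS j]
        have : S ξ 0 (m + 0) ω = S ξ 0 m ω := by norm_num
        rw [show m + 0 = m from rfl]
        linarith
      · have := h i' (Finset.mem_range.mpr (by omega))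
        rw [hS i', hS j]
        linarith

/-- on the event that the first record is at time `m ≤ n`, the count up to `n` is one plus
the count of the shifted walk up to `n - m`. -/
lemma cnt_split {m n : ℕ} (hm : 1 ≤ m) (hmn : m ≤ n) {ω : Ω} (hT : ω ∈ Tev ξ m) :
    cnt ξ 0 n ω = 1 + cnt ξ m (n - m) ω := by
  classical
  obtain ⟨hrec, hnorec⟩ := (Tev_iff hm ω).mp hT
  unfold cnt
  rw [Icc_one_eq_Ioc, ← Finset.sum_Ioc_consecutive _ (Nat.zero_le m) hmn]
  congr 1
  · rw [← Icc_one_eq_Ioc, sum_Icc_one]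
    have hsplit : ∀ i ∈ Finset.range m, (if recP ξ 0 (i + 1) ω then (1:ℕ) else 0)
        = if i + 1 = m then 1 else 0 := by
      intro i hi
      simp only [Finset.mem_range] at hi
      rcases eq_or_ne (i + 1) m with h | h
      · simp [h, hrec]
      · have : ¬ recP ξ 0 (i + 1) ω := hnorec (i + 1) (Finset.mem_Icc.mpr ⟨by omega, by omega⟩)
        simp [h, this]
    have hsplit2 : ∀ i ∈ Finset.range m, (if i + 1 = m then (1:ℕ) else 0)
        = if i = m - 1 then 1 else 0 := by
      intro i hi
      simp only [Finset.mem_range] at hi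
      exact if_congr (by omega) rfl rfl
    rw [Finset.sum_congr rfl hsplit, Finset.sum_congr rfl hsplit2,
      Finset.sum_ite_eq' (Finset.range m) (m - 1) (fun _ => (1:ℕ)),
      if_pos (Finset.mem_range.mpr (by omega))]
  · rw [show Finset.Ioc m n = (Finset.Ioc 0 (n - m)).map (addLeftEmbedding m) by
        rw [Finset.map_add_left_Ioc]; congr 1; omega, Finset.sum_map, ← Icc_one_eq_Ioc,
      sum_Icc_one, sum_Icc_one]
    refine Finset.sum_congr rfl fun i _ => ?_
    have : recP ξ 0 (m + (i + 1)) ω ↔ recP ξ m (i + 1) ω := rec_shift hrec (by omega)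
    simp only [addLeftEmbedding_apply]
    exact if_congr this rfl rfl


/-! ### The renewal decomposition -/

open Classical in
lemma cnt_eq_zero (n : ℕ) : {ω : Ω | cnt ξ 0 n ω = 0} = Qev ξ n := by
  ext ω
  simp only [Set.mem_setOf_eq, Qev, cnt]
  rw [Finset.sum_eq_zero_iff]
  constructor
  · intro h
    refine (norec_iff 0 n ω).mp fun j hj hrec => ?_
    have := h j hj
    rw [if_pos hrec] at this
    exact one_ne_zero this
  · intro h j hj
    rw [if_neg ((norec_iff 0 n ω).mpr h j hj)]

include hmeas in
lemma measurableSet_cnt (c n k : ℕ) : MeasurableSet {ω : Ω | cnt ξ c n ω = k} := by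
  rw [cnt_event_eq]
  exact measurable_Vec ξ hmeas (c + 1) n (measurableSet_Cset n k)

include hmeas in
lemma measurableSet_Tev (m : ℕ) : MeasurableSet (Tev ξ m) := by
  rw [Tev_event_eq]
  exact measurable_Vec ξ hmeas (0 + 1) m (measurableSet_Bset m)

lemma decomposition (n k : ℕ) :
    {ω : Ω | cnt ξ 0 n ω = k + 1}
      = ⋃ m ∈ Finset.Icc 1 n, (Tev ξ m ∩ {ω : Ω | cnt ξ m (n - m) ω = k}) := by
  classical
  ext ω
  simp only [Set.mem_setOf_eq, Set.mem_iUnion, Set.mem_inter_iff, Finset.mem_Icc,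
    exists_prop]
  constructor
  · intro h
    set R := (Finset.Icc 1 n).filter (fun j => recP ξ 0 j ω) with hR
    have hne : R.Nonempty := by
      by_contra hemp
      rw [Finset.not_nonempty_iff_eq_empty] at hemp
      have : cnt ξ 0 n ω = 0 := by
        unfold cnt
        refine Finset.sum_eq_zero fun j hj => ?_
        rw [if_neg]
        intro hrec
        have : j ∈ R := Finset.mem_filter.mpr ⟨hj, hrec⟩
        simp [hemp] at this
      omega
    set m := R.min' hne with hm
    have hmem : m ∈ R := R.min'_mem hne
    rw [hR, Finset.mem_filter, Finset.mem_Icc] at hmem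
    have hT : ω ∈ Tev ξ m := by
      refine (Tev_iff hmem.1.1 ω).mpr ⟨hmem.2, fun j hj hrec => ?_⟩
      simp only [Finset.mem_Icc] at hj
      have hjR : j ∈ R := Finset.mem_filter.mpr
        ⟨Finset.mem_Icc.mpr ⟨hj.1, by omega⟩, hrec⟩
      have := R.min'_le j hjR
      omega
    refine ⟨m, ⟨hmem.1.1, hmem.1.2⟩, hT, ?_⟩
    have := cnt_split hmem.1.1 hmem.1.2 hT
    omega
  · rintro ⟨m, ⟨hm1, hm2⟩, hT, hcnt⟩
    rw [cnt_split hm1 hm2 hT, hcnt, Nat.add_comm]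

lemma Tev_disjoint {m m' : ℕ} (hm : 1 ≤ m) (hm' : 1 ≤ m') (hne : m ≠ m') :
    Disjoint (Tev ξ m) (Tev ξ m') := by
  wlog h : m < m' generalizing m m'
  · exact (this hm' hm hne.symm (by omega)).symm
  rw [Set.disjoint_left]
  rintro ω ⟨h1, h2⟩ ⟨h3, h4⟩
  have := h3 m (Finset.mem_Icc.mpr ⟨hm, by omega⟩)
  linarith

include hmeas hindep hident in
lemma renewal (n k : ℕ) :
    ℙ {ω : Ω | cnt ξ 0 n ω = k + 1}
      = ∑ m ∈ Finset.Icc 1 n, ℙ (Tev ξ m) * ℙ {ω : Ω | cnt ξ 0 (n - m) ω = k} := by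
  rw [decomposition n k,
    measure_biUnion_finset ?_ (fun m hm => (measurableSet_Tev hmeas m).inter
      (measurableSet_cnt hmeas m (n - m) k))]
  · refine Finset.sum_congr rfl fun m hm => ?_
    rw [Tev_event_eq, cnt_event_eq,
      prob_inter_vec hmeas hindep m (n - m) (measurableSet_Bset m) (measurableSet_Cset (n - m) k),
      prob_vec_shift hmeas hindep hident (m + 1) (0 + 1) (n - m) (measurableSet_Cset (n - m) k),
      ← cnt_event_eq, ← Tev_event_eq]
  · intro m hm m' hm' hne
    simp only [Finset.coe_sort_coe, Finset.mem_coe, Finset.mem_Icc] at hm hm'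
    exact Set.disjoint_of_subset Set.inter_subset_left Set.inter_subset_left
      (Tev_disjoint hm.1 hm'.1 hne)

lemma Tev_eq_diff (m : ℕ) : Tev ξ (m + 1) = Qev ξ m \ Qev ξ (m + 1) := by
  ext ω
  simp only [Tev, Qev, Set.mem_setOf_eq, Set.mem_diff, Nat.add_sub_cancel]
  constructor
  · rintro ⟨h1, h2⟩
    refine ⟨h1, fun hall => ?_⟩
    have := hall (m + 1) (Finset.mem_Icc.mpr ⟨by omega, le_rfl⟩)
    linarith
  · rintro ⟨h1, h2⟩
    refine ⟨h1, ?_⟩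
    by_contra hc
    push_neg at hc
    refine h2 fun j hj => ?_
    simp only [Finset.mem_Icc] at hj
    rcases Nat.lt_or_ge j (m + 1) with h | h
    · exact h1 j (Finset.mem_Icc.mpr ⟨hj.1, by omega⟩)
    · have : j = m + 1 := by omega
      rw [this]; exact hc

lemma Qev_antitone (m : ℕ) : Qev ξ (m + 1) ⊆ Qev ξ m := by
  intro ω h j hj
  simp only [Finset.mem_Icc] at hj
  exact h j (Finset.mem_Icc.mpr ⟨hj.1, by omega⟩)

lemma Qev_zero : Qev ξ 0 = Set.univ := by
  ext ω; simp [Qev]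

include hmeas in
lemma measurableSet_Qev (t : ℕ) : MeasurableSet (Qev ξ t) := by
  rw [← cnt_eq_zero]
  exact measurableSet_cnt hmeas 0 t 0


/-! ### The generating-function computation -/

lemma toReal_prob_nonneg (s : Set Ω) : 0 ≤ (ℙ s).toReal := ENNReal.toReal_nonneg

lemma toReal_prob_le_one (s : Set Ω) : (ℙ s).toReal ≤ 1 :=
  ENNReal.toReal_mono ENNReal.one_ne_top prob_le_one

lemma summable_norm_aux {z : ℝ} (hz0 : 0 ≤ z) (hz1 : z < 1) {f : ℕ → ℝ}
    (h0 : ∀ n, 0 ≤ f n) (h1 : ∀ n, f n ≤ 1) :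
    Summable fun n => ‖f n * z ^ n‖ := by
  refine Summable.of_nonneg_of_le (fun n => norm_nonneg _) (fun n => ?_)
    (summable_geometric_of_lt_one hz0 hz1)
  rw [Real.norm_eq_abs, abs_mul, abs_of_nonneg (h0 n), abs_of_nonneg (pow_nonneg hz0 n)]
  calc f n * z ^ n ≤ 1 * z ^ n := by
        exact mul_le_mul_of_nonneg_right (h1 n) (pow_nonneg hz0 n)
    _ = z ^ n := one_mul _

lemma Tev_zero : Tev ξ 0 = ∅ := by
  ext ω
  simp [Tev, S_zero]

include hmeas hindep hident in
lemma master (z : ℝ) (hz0 : 0 ≤ z) (hz1 : z < 1) (k : ℕ) :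
    ∑' n : ℕ, (ℙ {ω : Ω | cnt ξ 0 n ω = k}).toReal * z ^ n
      = (1 - (1 - z) * ∑' t : ℕ, (ℙ (Qev ξ t)).toReal * z ^ t) ^ k
        * ∑' t : ℕ, (ℙ (Qev ξ t)).toReal * z ^ t := by
  set q : ℕ → ℝ := fun t => (ℙ (Qev ξ t)).toReal with hq
  set p : ℕ → ℕ → ℝ := fun n k => (ℙ {ω : Ω | cnt ξ 0 n ω = k}).toReal with hp
  set a : ℕ → ℝ := fun m => (ℙ (Tev ξ m)).toReal with ha
  set Qz : ℝ := ∑' t : ℕ, q t * z ^ t with hQz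
  -- summability
  have hqn : Summable fun t => ‖q t * z ^ t‖ :=
    summable_norm_aux hz0 hz1 (fun n => toReal_prob_nonneg _) (fun n => toReal_prob_le_one _)
  have hqs : Summable fun t => q t * z ^ t := hqn.of_norm
  have han : Summable fun m => ‖a m * z ^ m‖ :=
    summable_norm_aux hz0 hz1 (fun n => toReal_prob_nonneg _) (fun n => toReal_prob_le_one _)
  have has : Summable fun m => a m * z ^ m := han.of_norm
  have hpn : ∀ k, Summable fun n => ‖p n k * z ^ n‖ := fun k =>
    summable_norm_aux hz0 hz1 (fun n => toReal_prob_nonneg _) (fun n => toReal_prob_le_one _)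
  have hps : ∀ k, Summable fun n => p n k * z ^ n := fun k => (hpn k).of_norm
  -- basic values
  have ha0 : a 0 = 0 := by
    rw [ha]; simp [Tev_zero]
  have hq0 : q 0 = 1 := by
    rw [hq]; simp [Qev_zero]
  have hasucc : ∀ m : ℕ, a (m + 1) = q m - q (m + 1) := by
    intro m
    rw [ha, hq]
    simp only
    rw [Tev_eq_diff, measure_diff (Qev_antitone m)
        ((measurableSet_Qev hmeas (m + 1)).nullMeasurableSet) (measure_ne_top _ _),
      ENNReal.toReal_sub_of_le (measure_mono (Qev_antitone m)) (measure_ne_top _ _)]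
  -- the generating function of the first-record time
  have hfz : ∑' m : ℕ, a m * z ^ m = 1 - (1 - z) * Qz := by
    rw [Summable.tsum_eq_zero_add has, ha0, zero_mul, zero_add]
    have h1 : ∀ m : ℕ, a (m + 1) * z ^ (m + 1)
        = q m * z ^ m * z - q (m + 1) * z ^ (m + 1) := by
      intro m
      rw [hasucc m, sub_mul, pow_succ]
      ring
    rw [tsum_congr h1]
    have hs1 : Summable fun m => q m * z ^ m * z := hqs.mul_right z
    have hs2 : Summable fun m => q (m + 1) * z ^ (m + 1) :=
      hqs.comp_injective fun m m' h => by omega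
    rw [Summable.tsum_sub hs1 hs2, hqs.tsum_mul_right z]
    have h2 : ∑' m : ℕ, q (m + 1) * z ^ (m + 1) = Qz - 1 := by
      have := Summable.tsum_eq_zero_add hqs
      rw [← hQz, hq0, pow_zero, one_mul] at this
      linarith
    rw [h2, ← hQz]
    ring
  -- the renewal equation, in real form
  have hren : ∀ n k : ℕ, p n (k + 1)
      = ∑ m ∈ Finset.range (n + 1), a m * p (n - m) k := by
    intro n k
    have h := renewal hmeas hindep hident n k
    have hne : ∀ m ∈ Finset.Icc 1 n,
        ℙ (Tev ξ m) * ℙ {ω : Ω | cnt ξ 0 (n - m) ω = k} ≠ ⊤ :=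
      fun m _ => ENNReal.mul_ne_top (measure_ne_top _ _) (measure_ne_top _ _)
    have := congrArg ENNReal.toReal h
    rw [ENNReal.toReal_sum hne] at this
    rw [hp]
    simp only
    rw [this, Finset.sum_range_succ', sum_Icc_one
      (fun m => (ℙ (Tev ξ m) * ℙ {ω : Ω | cnt ξ 0 (n - m) ω = k}).toReal) n]
    rw [ha0, zero_mul, add_zero]
    exact Finset.sum_congr rfl fun i _ => by rw [ENNReal.toReal_mul]
  -- main induction
  induction k with
  | zero =>
      rw [pow_zero, one_mul, hQz]
      refine tsum_congr fun n => ?_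
      show (ℙ {ω : Ω | cnt ξ 0 n ω = 0}).toReal * z ^ n = (ℙ (Qev ξ n)).toReal * z ^ n
      rw [cnt_eq_zero]
  | succ k ih =>
      have step : ∑' n : ℕ, p n (k + 1) * z ^ n
          = (∑' m : ℕ, a m * z ^ m) * ∑' n : ℕ, p n k * z ^ n := by
        rw [tsum_mul_tsum_eq_tsum_sum_range_of_summable_norm han (hpn k)]
        refine tsum_congr fun n => ?_
        rw [hren n k, Finset.sum_mul]
        refine Finset.sum_congr rfl fun m hm => ?_
        simp only [Finset.mem_range] at hm
        rw [show a m * z ^ m * (p (n - m) k * z ^ (n - m))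
            = a m * p (n - m) k * (z ^ m * z ^ (n - m)) by ring, ← pow_add,
          show m + (n - m) = n by omega]
      rw [step, hfz, ih]
      ring


end RecordAux

open Classical in
/-- Renewal identity for the record counts of a random walk: with
`q t = P(S_1 ≤ 0, …, S_t ≤ 0)`, `Q z = ∑ q(t) z^t`, and `N n` the number of upper
records of the walk among times `1, …, n`, for every `k ≥ 0` and `0 ≤ z < 1`,
`∑_n P(N_n = k) z^n = (1 - (1 - z) Q(z))^k Q(z)`. -/
theorem record_count_generating_function {Ω : Type*} [MeasureSpace Ω]
    [IsProbabilityMeasure (ℙ : Measure Ω)]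
    (ξ : ℕ → Ω → ℝ) (hmeas : ∀ i, Measurable (ξ i))
    (hindep : iIndepFun ξ ℙ)
    (hident : ∀ i, Measure.map (ξ i) ℙ = Measure.map (ξ 1) ℙ)
    (k : ℕ) (z : ℝ) (hz0 : 0 ≤ z) (hz1 : z < 1) :
    (∑' n : ℕ,
        (ℙ {ω | (∑ j ∈ Finset.Icc 1 n,
            if ∀ i ∈ Finset.range j,
                (∑ l ∈ Finset.Icc 1 i, ξ l ω) < (∑ l ∈ Finset.Icc 1 j, ξ l ω)
              then 1 else 0) = k}).toReal * z ^ n)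
      = (1 - (1 - z) * (∑' t : ℕ,
            (ℙ {ω | ∀ j ∈ Finset.Icc 1 t, (∑ i ∈ Finset.Icc 1 j, ξ i ω) ≤ 0}).toReal
              * z ^ t)) ^ k
        * (∑' t : ℕ,
            (ℙ {ω | ∀ j ∈ Finset.Icc 1 t, (∑ i ∈ Finset.Icc 1 j, ξ i ω) ≤ 0}).toReal
              * z ^ t) := by
  have hN : ∀ n : ℕ, {ω : Ω | (∑ j ∈ Finset.Icc 1 n,
      if ∀ i ∈ Finset.range j,
          (∑ l ∈ Finset.Icc 1 i, ξ l ω) < (∑ l ∈ Finset.Icc 1 j, ξ l ω)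
        then 1 else 0) = k} = {ω : Ω | RecordAux.cnt ξ 0 n ω = k} := by
    intro n
    ext ω
    simp only [Set.mem_setOf_eq, RecordAux.cnt, RecordAux.recP, RecordAux.S, Nat.zero_add]
  have hQ : ∀ t : ℕ, {ω : Ω | ∀ j ∈ Finset.Icc 1 t, (∑ i ∈ Finset.Icc 1 j, ξ i ω) ≤ 0}
      = RecordAux.Qev ξ t := by
    intro t
    ext ω
    simp only [Set.mem_setOf_eq, RecordAux.Qev, RecordAux.S, Nat.zero_add]
  have hQs : (∑' t : ℕ,
      (ℙ {ω | ∀ j ∈ Finset.Icc 1 t, (∑ i ∈ Finset.Icc 1 j, ξ i ω) ≤ 0}).toReal * z ^ t)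
      = ∑' t : ℕ, (ℙ (RecordAux.Qev ξ t)).toReal * z ^ t :=
    tsum_congr fun t => by rw [hQ t]
  have hNs : (∑' n : ℕ,
      (ℙ {ω | (∑ j ∈ Finset.Icc 1 n,
          if ∀ i ∈ Finset.range j,
              (∑ l ∈ Finset.Icc 1 i, ξ l ω) < (∑ l ∈ Finset.Icc 1 j, ξ l ω)
            then 1 else 0) = k}).toReal * z ^ n)
      = ∑' n : ℕ, (ℙ {ω : Ω | RecordAux.cnt ξ 0 n ω = k}).toReal * z ^ n :=
    tsum_congr fun n => by rw [hN n]
  rw [hNs, hQs]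
  exact RecordAux.master hmeas hindep hident z hz0 hz1 k
end
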